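/- arXiv:2103.07073 — 3 statements merged into one kernel-verified Lean document; each statement's English description precedes it below -/
import Mathlib

section
/- Let ε > 0, Δf > 0, m a natural number, and a, a', z : Fin m → ℝ with ∑ i, |a i - a' i| ≤ Δf. Then ∏ i, exp(-|z i - a i|·ε/Δf) ≤ exp(ε) · ∏ i, exp(-|z i - a' i|·ε/Δf). -/
theorem laplace_density_ratio_bound
    (ε Δf : ℝ) (hε : 0 < ε) (hΔf : 0 < Δf)
    (m : ℕ) (a a' z : Fin m → ℝ)
    (hsens : ∑ i : Fin m, |a i - a' i| ≤ Δf) :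
    ∏ i : Fin m, Real.exp (-|z i - a i| * ε / Δf) ≤
      Real.exp ε * ∏ i : Fin m, Real.exp (-|z i - a' i| * ε / Δf) := by
  rw [← Real.exp_sum, ← Real.exp_sum, ← Real.exp_add, Real.exp_le_exp]
  have key : ∑ i : Fin m, (|z i - a' i| - |z i - a i|) ≤ Δf := by
    refine le_trans (Finset.sum_le_sum fun i _ => ?_) hsens
    have := abs_sub_abs_le_abs_sub (z i - a' i) (z i - a i)
    calc |z i - a' i| - |z i - a i| ≤ |(z i - a' i) - (z i - a i)| := this
      _ = |a i - a' i| := by ring_nf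
  have h : ∑ i : Fin m, (-|z i - a i| * ε / Δf) - ∑ i : Fin m, (-|z i - a' i| * ε / Δf)
      = (∑ i : Fin m, (|z i - a' i| - |z i - a i|)) * (ε / Δf) := by
    rw [← Finset.sum_sub_distrib, Finset.sum_mul]
    congr 1; ext i; ring
  have : (∑ i : Fin m, (|z i - a' i| - |z i - a i|)) * (ε / Δf) ≤ Δf * (ε / Δf) :=
    mul_le_mul_of_nonneg_right key (by positivity)
  have hc : Δf * (ε / Δf) = ε := by field_simp
  rw [hc] at this
  linarith
end

section
/- Let Δ > 0 and ε > 0, and let μ, μ' : ℝ be real numbers with |μ - μ'| ≤ Δ. Define the Laplace probability measure with center c and scale b = Δ/ε as Lebesgue measure on ℝ with density x ↦ (1/(2b))·exp(-|x - c|/b). Then for every measurable set S ⊆ ℝ, the Laplace measure centered at μ assigns S mass at most exp(ε) times the mass assigned to S by the Laplace measure centered at μ'. -/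
open MeasureTheory

theorem laplace_mechanism_one_dim
    (Δ ε : ℝ) (hΔ : 0 < Δ) (hε : 0 < ε)
    (μ μ' : ℝ) (hsens : |μ - μ'| ≤ Δ) :
    ∀ S : Set ℝ, MeasurableSet S →
      (volume.withDensity fun x =>
          ENNReal.ofReal ((1 / (2 * (Δ / ε))) * Real.exp (-|x - μ| / (Δ / ε)))) S ≤
        ENNReal.ofReal (Real.exp ε) *
          (volume.withDensity fun x =>
            ENNReal.ofReal ((1 / (2 * (Δ / ε))) * Real.exp (-|x - μ'| / (Δ / ε)))) S := by
  intro S hS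
  have hb : 0 < Δ / ε := div_pos hΔ hε
  have hc : 0 ≤ 1 / (2 * (Δ / ε)) := by positivity
  rw [withDensity_apply _ hS, withDensity_apply _ hS, ← lintegral_const_mul' _ _ ENNReal.ofReal_ne_top]
  refine lintegral_mono fun x => ?_
  rw [← ENNReal.ofReal_mul (Real.exp_nonneg _)]
  apply ENNReal.ofReal_le_ofReal
  rw [mul_comm (Real.exp ε), mul_assoc]
  apply mul_le_mul_of_nonneg_left _ hc
  rw [← Real.exp_add]
  apply Real.exp_le_exp.mpr
  have h1 : |x - μ'| - |x - μ| ≤ |μ - μ'| := by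
    have := abs_sub_abs_le_abs_sub (x - μ') (x - μ)
    have h2 : (x - μ') - (x - μ) = μ - μ' := by ring
    rwa [h2] at this
  rw [div_le_iff₀ hb, add_mul, div_mul_cancel₀ _ hb.ne', mul_div_cancel₀ _ hε.ne']
  linarith [le_trans h1 hsens]
end

section
/- Let (Ω₁, 𝒜₁) and (Ω₂, 𝒜₂) be measurable spaces, ε₁ ≥ 0 and ε₂ ≥ 0, and let μ₁, μ₁' be finite measures on Ω₁ and μ₂, μ₂' be finite (σ-finite) measures on Ω₂ such that μ₁ S ≤ exp(ε₁)·μ₁' S for all measurable S ⊆ Ω₁ and μ₂ S ≤ exp(ε₂)·μ₂' S for all measurable S ⊆ Ω₂. Then the product measures satisfy (μ₁ ×ₘ μ₂) S ≤ exp(ε₁ + ε₂) · (μ₁' ×ₘ μ₂') S for every measurable set S ⊆ Ω₁ × Ω₂. -/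
open MeasureTheory

open scoped ENNReal in
theorem MeasureTheory.Measure.prod_le_smul_prod {α β : Type*} [MeasurableSpace α]
    [MeasurableSpace β] {μ μ' : Measure α} {ν ν' : Measure β} [SFinite ν'] {c d : ℝ≥0∞}
    (hμ : μ ≤ c • μ') (hν : ν ≤ d • ν') : μ.prod ν ≤ (c * d) • μ'.prod ν' :=
  calc μ.prod ν ≤ (c • μ').prod (d • ν') := Measure.prod_mono hμ hν
    _ = (c * d) • μ'.prod ν' := by
      rw [Measure.prod_smul_left, Measure.prod_smul_right, smul_smul]

theorem dp_sequential_composition_general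
    {Ω₁ Ω₂ : Type*} [MeasurableSpace Ω₁] [MeasurableSpace Ω₂]
    (ε₁ ε₂ : ℝ)
    (μ₁ μ₁' : Measure Ω₁)
    (μ₂ μ₂' : Measure Ω₂) [IsFiniteMeasure μ₂']
    (h₁ : ∀ S : Set Ω₁, MeasurableSet S → μ₁ S ≤ ENNReal.ofReal (Real.exp ε₁) * μ₁' S)
    (h₂ : ∀ S : Set Ω₂, MeasurableSet S → μ₂ S ≤ ENNReal.ofReal (Real.exp ε₂) * μ₂' S) :
    ∀ S : Set (Ω₁ × Ω₂), MeasurableSet S →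
      (μ₁.prod μ₂) S ≤ ENNReal.ofReal (Real.exp (ε₁ + ε₂)) * (μ₁'.prod μ₂') S := by
  rw [Real.exp_add, ENNReal.ofReal_mul (Real.exp_nonneg _)]
  exact Measure.le_iff.1 (Measure.prod_le_smul_prod (Measure.le_iff.2 h₁) (Measure.le_iff.2 h₂))

theorem dp_sequential_composition
    {Ω₁ Ω₂ : Type*} [MeasurableSpace Ω₁] [MeasurableSpace Ω₂]
    (ε₁ ε₂ : ℝ) (hε₁ : 0 ≤ ε₁) (hε₂ : 0 ≤ ε₂)
    (μ₁ μ₁' : Measure Ω₁) [IsFiniteMeasure μ₁] [IsFiniteMeasure μ₁']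
    (μ₂ μ₂' : Measure Ω₂) [IsFiniteMeasure μ₂] [IsFiniteMeasure μ₂']
    (h₁ : ∀ S : Set Ω₁, MeasurableSet S → μ₁ S ≤ ENNReal.ofReal (Real.exp ε₁) * μ₁' S)
    (h₂ : ∀ S : Set Ω₂, MeasurableSet S → μ₂ S ≤ ENNReal.ofReal (Real.exp ε₂) * μ₂' S) :
    ∀ S : Set (Ω₁ × Ω₂), MeasurableSet S →
      (μ₁.prod μ₂) S ≤ ENNReal.ofReal (Real.exp (ε₁ + ε₂)) * (μ₁'.prod μ₂') S :=
  dp_sequential_composition_general ε₁ ε₂ μ₁ μ₁' μ₂ μ₂' h₁ h₂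
end
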